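/- Assume the direct-system setup with the interleaving hypothesis (H), and assume that for every k and all n < m the transition map j^k_{n,m} : G^k_n → G^k_m is the zero homomorphism. Then F_∞ is trivial, i.e. F_∞ = 0. -/

import Mathlib

theorem AddMonoidHom.apply_eq_zero_of_interleaving {A B C D E : Type*} [AddZeroClass A]
    [AddZeroClass B] [AddZeroClass C] [AddZeroClass D] [AddZeroClass E]
    (f : A →+ B) (a : A →+ C) (g : C →+ D) (a' : B →+ D) (b : D →+ E) (h : B →+ E)
    (hsq : ∀ x, a' (f x) = g (a x)) (htri : ∀ y, b (a' y) = h y) (hg : ∀ y, g y = 0) (x : A) :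
    h (f x) = 0 := by
  rw [← htri, hsq, hg, map_zero]

theorem eq_zero_of_transition_eq_zero {F : ℕ → Type*} [∀ n, AddZeroClass (F n)] {Finf : Type*}
    [AddZeroClass Finf] (i2 : ∀ n m : ℕ, n ≤ m → (F n →+ F m)) (i : ∀ n, F n →+ Finf)
    (hicompat : ∀ (n m : ℕ) (h : n ≤ m) (x : F n), i m (i2 n m h x) = i n x)
    {n m : ℕ} (h : n ≤ m) {x : F n} (hx : i2 n m h x = 0) : i n x = 0 := by
  rw [← hicompat n m h x, hx, map_zero]

theorem finf_trivial
    (F : ℕ → Type) [∀ n, AddCommGroup (F n)]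
    (Finf : Type) [AddCommGroup Finf]
    (i2 : ∀ n m : ℕ, n ≤ m → (F n →+ F m))
    (i : ∀ n, F n →+ Finf)
    (hicompat : ∀ (n m : ℕ) (h : n ≤ m) (x : F n), i m (i2 n m h x) = i n x)
    (hiexh : ∀ z : Finf, ∃ (n : ℕ) (x : F n), i n x = z)
    (G : ℕ → ℕ → Type) [∀ k n, AddCommGroup (G k n)]
    (j2 : ∀ (k n m : ℕ), n ≤ m → (G k n →+ G k m))
    (hH : ∀ n₀ : ℕ, ∃ (k : ℕ) (a : ∀ n, F n →+ G k (n+1)) (b : ∀ n, G k n →+ F (n+1)),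
      (∀ n, n + 1 ≤ n₀ → ∀ x : F n,
        a (n+1) (i2 n (n+1) (by omega) x) = j2 k (n+1) (n+2) (by omega) (a n x)) ∧
      (∀ n, n + 1 ≤ n₀ → ∀ y : G k n,
        b (n+1) (j2 k n (n+1) (by omega) y) = i2 (n+1) (n+2) (by omega) (b n y)) ∧
      (∀ n, n + 1 ≤ n₀ → ∀ x : F n, b (n+1) (a n x) = i2 n (n+2) (by omega) x) ∧
      (∀ n, n + 1 ≤ n₀ → ∀ y : G k n, a (n+1) (b n y) = j2 k n (n+2) (by omega) y))
    (hzero : ∀ (k n m : ℕ) (h : n < m) (y : G k n), j2 k n m h.le y = 0)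
    : ∀ z : Finf, z = 0 := by
  intro z
  obtain ⟨n, x, rfl⟩ := hiexh z
  obtain ⟨k, a, b, ha, -, hba, -⟩ := hH (n + 2)
  -- `i_{n+1,n+3} ∘ i_{n,n+1} = b_{n+2} ∘ a_{n+1} ∘ i_{n,n+1} = b_{n+2} ∘ j^k_{n+1,n+2} ∘ a_n = 0`
  have hx : i2 (n + 1) (n + 3) (by omega) (i2 n (n + 1) (by omega) x) = 0 :=
    AddMonoidHom.apply_eq_zero_of_interleaving _ (a n) _ _ (b (n + 2)) _ (ha n (by omega))
      (hba (n + 1) (by omega)) (hzero k (n + 1) (n + 2) (by omega)) x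
  rw [← hicompat n (n + 1) (by omega) x]
  exact eq_zero_of_transition_eq_zero i2 i hicompat _ hx
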